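/- arXiv:2412.00649 — 4 statements merged into one kernel-verified Lean document; each statement's English description precedes it below -/
import Mathlib

section
/- Let A ⊂ ℝ^d be a d-dimensional polytope with set of facet-defining hyperplanes F, where each H ∈ F has outer unit normal n_H. A nonconstant compact convex subset M ⊆ A (with more than one point) admits no 'homothetic decomposition' of the form M = (1/2)(M + t) + (1/2)(M − t) with M ± t ⊆ A for nonzero t, nor a dilation M = (1/2)(z + (1+ε)(M−z)) + (1/2)(z + (1−ε)(M−z)) with both summand bodies contained in A for ε > 0, if and only if: (a) the normals {n_H : H ∈ F, H ∩ M ≠ ∅} span ℝ^d, and (b) the intersection of all H ∈ F with H ∩ M ≠ ∅ is empty. -/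
open scoped Pointwise

/-- Euclidean dot product on `Fin d → ℝ`. -/
def dot {d : ℕ} (x y : Fin d → ℝ) : ℝ := ∑ i, x i * y i

/-!
Both decompositions move each point `m ∈ M` to `m ± ε u(m)`, with `u(m) = t` for a translation
and `u(m) = m - z` for a dilation about `z`. A constraint that is slack on the compact set `M`
survives every small perturbation, so only the binding constraints matter. A binding constraint
`⟪x, nᵢ⟫ ≤ cᵢ` tolerates a two-sided perturbation of a point `m ∈ M ∩ Hᵢ` only if
`⟪u(m), nᵢ⟫ = 0`: for translations this says `t ⟂ nᵢ`, for dilations `z ∈ Hᵢ`. Conversely, if `t`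
is orthogonal to all binding normals, or `z` lies on all binding hyperplanes, the binding
constraints are preserved for every small `ε`.
-/

open Filter Topology Matrix

lemma dot_eq_dotProduct {d : ℕ} (x y : Fin d → ℝ) : dot x y = x ⬝ᵥ y := rfl

lemma dot_add {d : ℕ} (x y v : Fin d → ℝ) : dot (x + y) v = dot x v + dot y v :=
  add_dotProduct x y v

lemma dot_sub {d : ℕ} (x y v : Fin d → ℝ) : dot (x - y) v = dot x v - dot y v :=
  sub_dotProduct x y v

lemma dot_smul {d : ℕ} (r : ℝ) (x v : Fin d → ℝ) : dot (r • x) v = r * dot x v :=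
  smul_dotProduct r x v

lemma continuous_dot_left {d : ℕ} (v : Fin d → ℝ) : Continuous fun x : Fin d → ℝ => dot x v :=
  continuous_id.dotProduct continuous_const

lemma span_eq_top_iff_forall_dot_eq_zero {d : ℕ} (s : Set (Fin d → ℝ)) :
    Submodule.span ℝ s = ⊤ ↔ ∀ t, (∀ v ∈ s, dot t v = 0) → t = 0 := by
  rw [← Submodule.dualAnnihilator_eq_bot_iff, Submodule.eq_bot_iff]
  simp only [← SetLike.mem_coe, Submodule.coe_dualAnnihilator_span,
    (dotProductEquiv ℝ (Fin d)).symm.toEquiv.forall_congr_left]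
  simp [Set.subset_def, dot_eq_dotProduct]

lemma Filter.Eventually.exists_pos_and_neg {p : ℝ → Prop} (h : ∀ᶠ s in 𝓝 0, p s) :
    ∃ ε > 0, p ε ∧ p (-ε) := by
  obtain ⟨δ, hδ, hball⟩ := Metric.eventually_nhds_iff.1 h
  refine ⟨δ / 2, by positivity, hball ?_, hball ?_⟩ <;>
    simp [abs_of_pos hδ] <;> linarith

lemma IsCompact.eventually_forall_add_mul_lt {X : Type*} [TopologicalSpace X] {M : Set X}
    (hM : IsCompact M) {f g : X → ℝ} (hf : Continuous f) (hg : Continuous g) {c : ℝ}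
    (h : ∀ m ∈ M, f m < c) : ∀ᶠ s in 𝓝 (0 : ℝ), ∀ m ∈ M, f m + s * g m < c :=
  hM.eventually_forall_of_forall_eventually fun m hm =>
    (isOpen_lt (by fun_prop) continuous_const).mem_nhds (by simpa using h m hm)

lemma add_singleton_subset_iff {E : Type*} [Add E] {M S : Set E} {t : E} :
    M + {t} ⊆ S ↔ ∀ m ∈ M, m + t ∈ S := by
  rw [Set.add_singleton, Set.image_subset_iff]
  rfl

lemma singleton_add_smul_add_singleton_neg {E : Type*} [AddCommGroup E] [Module ℝ E]
    (z : E) (r : ℝ) (M : Set E) :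
    ({z} : Set E) + r • (M + {-z}) = AffineMap.homothety z r '' M := by
  simp only [Set.singleton_add, Set.add_singleton, ← Set.image_smul, Set.image_image]
  congr 1
  funext m
  rw [AffineMap.homothety_apply, vsub_eq_sub, vadd_eq_add, add_comm z, sub_eq_add_neg]

lemma homothety_one_add {E : Type*} [AddCommGroup E] [Module ℝ E] (z m : E) (s : ℝ) :
    AffineMap.homothety z (1 + s) m = m + s • (m - z) := by
  rw [AffineMap.homothety_apply, vsub_eq_sub, vadd_eq_add]
  module

section Polytope

variable {d : ℕ} {ι : Type*} (n : ι → Fin d → ℝ) (c : ι → ℝ)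

def polyhedron : Set (Fin d → ℝ) := ⋂ i, {z | dot z (n i) ≤ c i}

def bindingConstraints (M : Set (Fin d → ℝ)) : Set ι :=
  {i | (M ∩ {z | dot z (n i) = c i}).Nonempty}

variable {n c} {M : Set (Fin d → ℝ)}

lemma mem_polyhedron {x : Fin d → ℝ} : x ∈ polyhedron n c ↔ ∀ i, dot x (n i) ≤ c i := by
  simp [polyhedron]

lemma dot_eq_zero_of_add_mem_of_sub_mem {m u : Fin d → ℝ} {i : ι} (hm : dot m (n i) = c i)
    (h₁ : m + u ∈ polyhedron n c) (h₂ : m - u ∈ polyhedron n c) : dot u (n i) = 0 := by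
  have h₁ := mem_polyhedron.1 h₁ i
  have h₂ := mem_polyhedron.1 h₂ i
  rw [dot_add] at h₁
  rw [dot_sub] at h₂
  linarith

lemma eventually_add_smul_mem_polyhedron [Finite ι] (hM : IsCompact M) (hMP : M ⊆ polyhedron n c)
    {u : (Fin d → ℝ) → Fin d → ℝ} (hu : Continuous u)
    (hbind : ∀ i ∈ bindingConstraints n c M,
      ∀ᶠ s in 𝓝 (0 : ℝ), ∀ m ∈ M, dot (m + s • u m) (n i) ≤ c i) :
    ∀ᶠ s in 𝓝 (0 : ℝ), ∀ m ∈ M, m + s • u m ∈ polyhedron n c := by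
  have hall : ∀ i, ∀ᶠ s in 𝓝 (0 : ℝ), ∀ m ∈ M, dot (m + s • u m) (n i) ≤ c i := by
    intro i
    by_cases hi : i ∈ bindingConstraints n c M
    · exact hbind i hi
    have hslack : ∀ m ∈ M, dot m (n i) < c i := fun m hm =>
      (mem_polyhedron.1 (hMP hm) i).lt_of_ne fun h => hi ⟨m, hm, h⟩
    filter_upwards [hM.eventually_forall_add_mul_lt (continuous_dot_left _)
      ((continuous_dot_left _).comp hu) hslack] with s hs m hm
    rw [dot_add, dot_smul]
    exact (hs m hm).le
  filter_upwards [eventually_all.2 hall] with s hs m hm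
  exact mem_polyhedron.2 fun i => hs i m hm

lemma exists_translate_subset_of_span_ne_top [Finite ι] (hM : IsCompact M)
    (hMP : M ⊆ polyhedron n c) (hspan : Submodule.span ℝ (n '' bindingConstraints n c M) ≠ ⊤) :
    ∃ t : Fin d → ℝ, t ≠ 0 ∧ M + {t} ⊆ polyhedron n c ∧ M + {-t} ⊆ polyhedron n c := by
  obtain ⟨t, ht, ht0⟩ : ∃ t, (∀ v ∈ n '' bindingConstraints n c M, dot t v = 0) ∧ t ≠ 0 := by
    simpa [span_eq_top_iff_forall_dot_eq_zero] using hspan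
  have hP := eventually_add_smul_mem_polyhedron hM hMP (u := fun _ => t) continuous_const
    fun i hi => Eventually.of_forall fun s m hm => by
      rw [dot_add, dot_smul, ht _ (Set.mem_image_of_mem n hi), mul_zero, add_zero]
      exact mem_polyhedron.1 (hMP hm) i
  obtain ⟨ε, hε, h₁, h₂⟩ := hP.exists_pos_and_neg
  refine ⟨ε • t, smul_ne_zero hε.ne' ht0, add_singleton_subset_iff.2 h₁,
    add_singleton_subset_iff.2 ?_⟩
  simpa only [neg_smul] using h₂

lemma exists_homothety_subset_of_mem_iInter [Finite ι] (hM : IsCompact M)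
    (hMP : M ⊆ polyhedron n c) {z : Fin d → ℝ}
    (hz : z ∈ ⋂ i ∈ bindingConstraints n c M, {x | dot x (n i) = c i}) :
    ∃ ε : ℝ, 0 < ε ∧ AffineMap.homothety z (1 + ε) '' M ⊆ polyhedron n c ∧
      AffineMap.homothety z (1 - ε) '' M ⊆ polyhedron n c := by
  have hP := eventually_add_smul_mem_polyhedron hM hMP (u := fun m => m - z) (by fun_prop)
    fun i hi => by
      have hzi : dot z (n i) = c i := Set.mem_iInter₂.1 hz i hi
      filter_upwards [Ioi_mem_nhds (neg_one_lt_zero : (-1 : ℝ) < 0)] with s hs m hm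
      have hmi := mem_polyhedron.1 (hMP hm) i
      rw [dot_add, dot_smul, dot_sub, hzi]
      -- `dot (m + s • (m - z)) (n i) - c i = (1 + s) * (dot m (n i) - c i)`
      nlinarith [hs.out]
  obtain ⟨ε, hε, h₁, h₂⟩ := hP.exists_pos_and_neg
  refine ⟨ε, hε, Set.image_subset_iff.2 fun m hm => ?_, Set.image_subset_iff.2 fun m hm => ?_⟩
  · rw [Set.mem_preimage, homothety_one_add]
    exact h₁ m hm
  · rw [Set.mem_preimage, sub_eq_add_neg, homothety_one_add]
    exact h₂ m hm

lemma eq_zero_of_translate_subset (hspan : Submodule.span ℝ (n '' bindingConstraints n c M) = ⊤)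
    {t : Fin d → ℝ} (h₁ : M + {t} ⊆ polyhedron n c) (h₂ : M + {-t} ⊆ polyhedron n c) :
    t = 0 := by
  refine (span_eq_top_iff_forall_dot_eq_zero _).1 hspan t ?_
  rintro _ ⟨i, ⟨m, hm, hmi⟩, rfl⟩
  exact dot_eq_zero_of_add_mem_of_sub_mem hmi (add_singleton_subset_iff.1 h₁ m hm)
    (by simpa only [sub_eq_add_neg] using add_singleton_subset_iff.1 h₂ m hm)

lemma mem_iInter_of_homothety_subset {z : Fin d → ℝ} {ε : ℝ} (hε : 0 < ε)
    (h₁ : AffineMap.homothety z (1 + ε) '' M ⊆ polyhedron n c)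
    (h₂ : AffineMap.homothety z (1 - ε) '' M ⊆ polyhedron n c) :
    z ∈ ⋂ i ∈ bindingConstraints n c M, {x | dot x (n i) = c i} := by
  refine Set.mem_iInter₂.2 fun i ⟨m, hm, hmi⟩ => ?_
  have h := dot_eq_zero_of_add_mem_of_sub_mem (u := ε • (m - z)) hmi
    (by simpa only [homothety_one_add] using h₁ (Set.mem_image_of_mem _ hm))
    (by simpa only [sub_eq_add_neg, homothety_one_add, neg_smul]
      using h₂ (Set.mem_image_of_mem _ hm))
  rw [dot_smul, dot_sub, hmi, mul_eq_zero, sub_eq_zero] at h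
  exact (h.resolve_left hε.ne').symm

end Polytope

theorem stmt3_general {d : ℕ} {ι : Type*} [Fintype ι]
    (n : ι → (Fin d → ℝ)) (c : ι → ℝ) (A M : Set (Fin d → ℝ))
    (hA : A = ⋂ i, {z | dot z (n i) ≤ c i})
    (hMA : M ⊆ A) (hMcpt : IsCompact M) :
    ((¬ ∃ t : Fin d → ℝ, t ≠ 0 ∧ M + ({t} : Set (Fin d → ℝ)) ⊆ A ∧
        M + ({-t} : Set (Fin d → ℝ)) ⊆ A) ∧
      (¬ ∃ (z : Fin d → ℝ) (ε : ℝ), 0 < ε ∧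
        ({z} : Set (Fin d → ℝ)) + (1 + ε) • (M + ({-z} : Set (Fin d → ℝ))) ⊆ A ∧
        ({z} : Set (Fin d → ℝ)) + (1 - ε) • (M + ({-z} : Set (Fin d → ℝ))) ⊆ A))
    ↔
    (Submodule.span ℝ (n '' {i | (M ∩ {z | dot z (n i) = c i}).Nonempty}) = ⊤ ∧
      (⋂ i ∈ {i | (M ∩ {z | dot z (n i) = c i}).Nonempty}, {z | dot z (n i) = c i})
        = (∅ : Set (Fin d → ℝ))) := by
  subst hA
  simp only [singleton_add_smul_add_singleton_neg]
  refine ⟨fun ⟨hT, hD⟩ => ⟨?_, ?_⟩, fun ⟨hspan, hinter⟩ => ⟨?_, ?_⟩⟩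
  · by_contra hspan
    exact hT (exists_translate_subset_of_span_ne_top hMcpt hMA hspan)
  · by_contra hinter
    obtain ⟨z, hz⟩ := Set.nonempty_iff_ne_empty.2 hinter
    exact hD ⟨z, exists_homothety_subset_of_mem_iInter hMcpt hMA hz⟩
  · rintro ⟨t, ht0, h₁, h₂⟩
    exact ht0 (eq_zero_of_translate_subset hspan h₁ h₂)
  · rintro ⟨z, ε, hε, h₁, h₂⟩
    exact Set.eq_empty_iff_forall_notMem.1 hinter z (mem_iInter_of_homothety_subset hε h₁ h₂)

/-- Let `A = ⋂ᵢ {z : z·nᵢ ≤ cᵢ}` be a `d`-dimensional polytope with facet-defining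
hyperplanes `Hᵢ = {z : z·nᵢ = cᵢ}` (unit outer normals `nᵢ`).  A nonconstant compact convex
`M ⊆ A` admits no homothetic decomposition by a nonzero translation `±t` keeping both
translates in `A`, nor by a dilation about a center `z` with factors `1 ± ε` keeping both
images in `A`, if and only if: (a) the normals of the binding constraints span `ℝ^d` and
(b) the binding hyperplanes have empty intersection. -/
theorem stmt3 {d : ℕ} {ι : Type*} [Fintype ι]
    (n : ι → (Fin d → ℝ)) (c : ι → ℝ) (A M : Set (Fin d → ℝ))
    (hA : A = ⋂ i, {z | dot z (n i) ≤ c i})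
    (hAcpt : IsCompact A) (hAint : (interior A).Nonempty)
    (hn : ∀ i, dot (n i) (n i) = 1)
    (hMA : M ⊆ A) (hMcpt : IsCompact M) (hMconv : Convex ℝ M)
    (hMnc : ∃ a ∈ M, ∃ b ∈ M, a ≠ b) :
    ((¬ ∃ t : Fin d → ℝ, t ≠ 0 ∧ M + ({t} : Set (Fin d → ℝ)) ⊆ A ∧
        M + ({-t} : Set (Fin d → ℝ)) ⊆ A) ∧
      (¬ ∃ (z : Fin d → ℝ) (ε : ℝ), 0 < ε ∧
        ({z} : Set (Fin d → ℝ)) + (1 + ε) • (M + ({-z} : Set (Fin d → ℝ))) ⊆ A ∧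
        ({z} : Set (Fin d → ℝ)) + (1 - ε) • (M + ({-z} : Set (Fin d → ℝ))) ⊆ A))
    ↔
    (Submodule.span ℝ (n '' {i | (M ∩ {z | dot z (n i) = c i}).Nonempty}) = ⊤ ∧
      (⋂ i ∈ {i | (M ∩ {z | dot z (n i) = c i}).Nonempty}, {z | dot z (n i) = c i})
        = (∅ : Set (Fin d → ℝ))) :=
  stmt3_general n c A M hA hMA hMcpt
end

section
/- Let A be the unit simplex {a ∈ ℝ^d₊ : Σᵢ aᵢ ≤ 1}. A nonempty compact convex subset M ⊆ A touches every facet of A (i.e., for each i there is a ∈ M with aᵢ = 0, and there is a ∈ M with Σᵢ aᵢ = 1) if and only if M cannot be written as λM' + (1−λ)M'' with λ ∈ (0,1) and M', M'' ⊆ A compact convex sets homothetic to M but distinct from M. -/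
open scoped Pointwise

/-- The unit simplex `{a ∈ ℝ^d₊ : Σᵢ aᵢ ≤ 1}`. -/
def stdSimplexSet (d : ℕ) : Set (Fin d → ℝ) := {a | (∀ i, 0 ≤ a i) ∧ ∑ i, a i ≤ 1}

/-- `K'` is positively homothetic to `K`: `K' = μ • K + {t}` with `μ > 0`. -/
def PosHomotheticTo {E : Type*} [AddCommGroup E] [Module ℝ E] (K' K : Set E) : Prop :=
  ∃ (μ : ℝ) (t : E), 0 < μ ∧ K' = μ • K + ({t} : Set E)

/-!
A combination `l • (μ' • M + {t'}) + (1 - l) • (μ'' • M + {t''})` of homothets of a convex set `M`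
is the homothet with ratio `l * μ' + (1 - l) * μ''` and translation `l • t' + (1 - l) • t''`.
A bounded set with two points is its own homothet only under the identity (compare diameters,
then iterate the translation), so a splitting forces that ratio to be `1` and that translation to
be `0`. If `M` touches the facet `xᵢ = 0`, every homothet of `M` inside the simplex has a
translation with `tᵢ ≥ 0`, and if `M` touches the facet `∑ xᵢ = 1`, it has `μ + ∑ tᵢ ≤ 1`; these
inequalities force both homothets to be `M` itself. Conversely, if `M` misses a facet, by
compactness it stays at positive distance from it, so for small `ε` the homothets of ratio `1 ± ε`
centred at the opposite vertex both lie in the simplex, and their average is `M`.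
-/

section Homothety

variable {E : Type*} [AddCommGroup E] [Module ℝ E]

theorem smul_add_singleton_eq_image (μ : ℝ) (M : Set E) (t : E) :
    μ • M + {t} = (fun x => μ • x + t) '' M := by
  rw [Set.add_singleton, ← Set.image_smul, Set.image_image]

theorem smul_add_singleton_subset_iff {μ : ℝ} {M A : Set E} {t : E} :
    μ • M + {t} ⊆ A ↔ ∀ x ∈ M, μ • x + t ∈ A := by
  rw [smul_add_singleton_eq_image, Set.image_subset_iff]
  rfl

theorem Convex.combo_smul_add_singleton {M : Set E} (hM : Convex ℝ M) {l μ' μ'' : ℝ}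
    (hl0 : 0 ≤ l) (hl1 : l ≤ 1) (hμ' : 0 ≤ μ') (hμ'' : 0 ≤ μ'') (t' t'' : E) :
    l • (μ' • M + {t'}) + (1 - l) • (μ'' • M + {t''})
      = (l * μ' + (1 - l) * μ'') • M + {l • t' + (1 - l) • t''} := by
  rw [smul_add, smul_add, smul_smul, smul_smul, Set.smul_set_singleton, Set.smul_set_singleton,
    hM.add_smul (mul_nonneg hl0 hμ') (mul_nonneg (sub_nonneg.mpr hl1) hμ''),
    add_add_add_comm, Set.singleton_add_singleton]

end Homothety

section Rigidity

variable {E : Type*} [NormedAddCommGroup E] [NormedSpace ℝ E]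

theorem diam_smul_add_singleton (μ : ℝ) (M : Set E) (t : E) :
    Metric.diam (μ • M + {t}) = |μ| * Metric.diam M := by
  rw [add_comm, Set.singleton_add, (isometry_add_left t).diam_image, diam_smul₀, Real.norm_eq_abs]

theorem eq_zero_of_add_singleton_eq {M : Set E} (hM : Bornology.IsBounded M) (hne : M.Nonempty)
    {t : E} (h : M + {t} = M) : t = 0 := by
  obtain ⟨a, ha⟩ := hne
  have hmem : ∀ n : ℕ, a + n • t ∈ M := by
    intro n
    induction n with
    | zero => simpa
    | succ n ih =>
      rw [← h, succ_nsmul, ← add_assoc]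
      exact Set.add_mem_add ih rfl
  have hle : ∀ n : ℕ, n * ‖t‖ ≤ Metric.diam M := fun n => by
    simpa [dist_eq_norm, RCLike.norm_nsmul ℝ] using Metric.dist_le_diam_of_mem hM (hmem n) ha
  by_contra ht
  obtain ⟨n, hn⟩ := exists_nat_gt (Metric.diam M / ‖t‖)
  rw [div_lt_iff₀ (norm_pos_iff.mpr ht)] at hn
  linarith [hle n]

theorem eq_one_and_eq_zero_of_smul_add_singleton_eq {M : Set E} (hM : Bornology.IsBounded M)
    (hM2 : M.Nontrivial) {μ : ℝ} (hμ : 0 < μ) {t : E} (h : μ • M + {t} = M) :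
    μ = 1 ∧ t = 0 := by
  have hμ1 : μ = 1 := by
    have hdiam := congrArg Metric.diam h
    rw [diam_smul_add_singleton, abs_of_pos hμ] at hdiam
    exact (mul_eq_right₀ (Metric.diam_pos hM2 hM).ne').mp hdiam
  subst hμ1
  rw [one_smul] at h
  exact ⟨rfl, eq_zero_of_add_singleton_eq hM hM2.nonempty h⟩

end Rigidity

section Splitting

variable {E : Type*} [NormedAddCommGroup E] [NormedSpace ℝ E]

def HasHomotheticSplitting (A M : Set E) : Prop :=
  ∃ (l : ℝ) (M' M'' : Set E), 0 < l ∧ l < 1 ∧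
    M' ⊆ A ∧ M'' ⊆ A ∧
    IsCompact M' ∧ Convex ℝ M' ∧ IsCompact M'' ∧ Convex ℝ M'' ∧
    PosHomotheticTo M' M ∧ PosHomotheticTo M'' M ∧
    M' ≠ M ∧ M'' ≠ M ∧
    M = l • M' + (1 - l) • M''

theorem hasHomotheticSplitting_of_subset {A M : Set E} (hMcpt : IsCompact M)
    (hMconv : Convex ℝ M) (hM2 : M.Nontrivial) (v : E) {ε : ℝ} (hε0 : 0 < ε) (hε1 : ε < 1)
    (hexp : (1 + ε) • M + {(-ε) • v} ⊆ A) (hshr : (1 - ε) • M + {ε • v} ⊆ A) :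
    HasHomotheticSplitting A M := by
  have hne : ∀ {μ : ℝ} {t : E}, 0 < μ → μ ≠ 1 → μ • M + {t} ≠ M := fun hμ hμ1 h =>
    hμ1 (eq_one_and_eq_zero_of_smul_add_singleton_eq hMcpt.isBounded hM2 hμ h).1
  refine ⟨1 / 2, _, _, by norm_num, by norm_num, hexp, hshr,
    (hMcpt.smul _).add isCompact_singleton, (hMconv.smul _).add (convex_singleton _),
    (hMcpt.smul _).add isCompact_singleton, (hMconv.smul _).add (convex_singleton _),
    ⟨1 + ε, _, by linarith, rfl⟩, ⟨1 - ε, _, by linarith, rfl⟩,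
    hne (by linarith) (by linarith), hne (by linarith) (by linarith), ?_⟩
  rw [hMconv.combo_smul_add_singleton (by norm_num) (by norm_num) (by linarith) (by linarith)]
  have hμ : 1 / 2 * (1 + ε) + (1 - 1 / 2) * (1 - ε) = 1 := by ring
  have ht : (1 / 2 : ℝ) • (-ε) • v + (1 - 1 / 2 : ℝ) • ε • v = 0 := by
    rw [smul_smul, smul_smul, ← add_smul]
    norm_num
  rw [hμ, ht, one_smul, Set.add_singleton]
  simp

end Splitting

section Simplex

variable {d : ℕ}

theorem convex_stdSimplexSet (d : ℕ) : Convex ℝ (stdSimplexSet d) := by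
  rintro x ⟨hx0, hx1⟩ y ⟨hy0, hy1⟩ a b ha hb hab
  refine ⟨fun i => ?_, ?_⟩
  · simp only [Pi.add_apply, Pi.smul_apply, smul_eq_mul]
    have hxi := hx0 i
    have hyi := hy0 i
    positivity
  · simp only [Pi.add_apply, Pi.smul_apply, smul_eq_mul, Finset.sum_add_distrib, ← Finset.mul_sum]
    nlinarith

theorem single_mem_stdSimplexSet (i : Fin d) : Pi.single i 1 ∈ stdSimplexSet d := by
  refine ⟨fun j => ?_, by simp⟩
  rcases eq_or_ne j i with rfl | hji
  · simp
  · simp [Pi.single_eq_of_ne hji]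

theorem zero_mem_stdSimplexSet : (0 : Fin d → ℝ) ∈ stdSimplexSet d :=
  ⟨fun _ => le_rfl, by simp⟩

theorem smul_sub_single_mem_stdSimplexSet {x : Fin d → ℝ} (hx : x ∈ stdSimplexSet d) {i : Fin d}
    {ε : ℝ} (hε : 0 ≤ ε) (hεx : ε ≤ x i) :
    (1 + ε) • x + (-ε) • Pi.single i 1 ∈ stdSimplexSet d := by
  refine ⟨fun j => ?_, ?_⟩
  · rcases eq_or_ne j i with rfl | hji
    · simp only [Pi.add_apply, Pi.smul_apply, smul_eq_mul, Pi.single_eq_same]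
      nlinarith
    · simp only [Pi.add_apply, Pi.smul_apply, smul_eq_mul, Pi.single_eq_of_ne hji]
      nlinarith [hx.1 j]
  · simp only [Pi.add_apply, Pi.smul_apply, smul_eq_mul, Finset.sum_add_distrib, ← Finset.mul_sum,
      Finset.sum_pi_single', Finset.mem_univ, if_true, mul_one]
    nlinarith [hx.2]

theorem smul_mem_stdSimplexSet {x : Fin d → ℝ} (hx : x ∈ stdSimplexSet d) {c : ℝ} (hc : 0 ≤ c)
    (hcx : c * ∑ i, x i ≤ 1) : c • x ∈ stdSimplexSet d :=
  ⟨fun i => mul_nonneg hc (hx.1 i), by simpa [← Finset.mul_sum] using hcx⟩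

end Simplex

section Facets

variable {d : ℕ} {M : Set (Fin d → ℝ)}

theorem hasHomotheticSplitting_of_forall_apply_ne_zero (hMA : M ⊆ stdSimplexSet d)
    (hMcpt : IsCompact M) (hMconv : Convex ℝ M) (hM2 : M.Nontrivial) {i : Fin d}
    (hi : ∀ a ∈ M, a i ≠ 0) : HasHomotheticSplitting (stdSimplexSet d) M := by
  obtain ⟨a, ha, hmin⟩ := hMcpt.exists_isMinOn hM2.nonempty (continuous_apply i).continuousOn
  have hpos : 0 < a i := ((hMA ha).1 i).lt_of_ne' (hi a ha)
  have hle : a i ≤ 1 :=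
    (Finset.single_le_sum (fun j _ => (hMA ha).1 j) (Finset.mem_univ i)).trans (hMA ha).2
  refine hasHomotheticSplitting_of_subset hMcpt hMconv hM2 (Pi.single i 1) (ε := a i / 2)
    (by linarith) (by linarith) (smul_add_singleton_subset_iff.mpr fun x hx => ?_)
    (smul_add_singleton_subset_iff.mpr fun x hx => convex_stdSimplexSet d (hMA hx)
      (single_mem_stdSimplexSet i) (by linarith) (by linarith) (by ring))
  have hax : a i ≤ x i := hmin hx
  exact smul_sub_single_mem_stdSimplexSet (hMA hx) (by linarith) (by linarith)

theorem hasHomotheticSplitting_of_forall_sum_ne_one (hMA : M ⊆ stdSimplexSet d)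
    (hMcpt : IsCompact M) (hMconv : Convex ℝ M) (hM2 : M.Nontrivial)
    (hs : ∀ a ∈ M, ∑ i, a i ≠ 1) : HasHomotheticSplitting (stdSimplexSet d) M := by
  have hcont : Continuous fun x : Fin d → ℝ => ∑ i, x i := by fun_prop
  obtain ⟨a, ha, hmax⟩ := hMcpt.exists_isMaxOn hM2.nonempty hcont.continuousOn
  have hlt : ∑ i, a i < 1 := (hMA ha).2.lt_of_ne (hs a ha)
  have hnonneg : 0 ≤ ∑ i, a i := Fintype.sum_nonneg (hMA ha).1
  refine hasHomotheticSplitting_of_subset hMcpt hMconv hM2 0 (ε := (1 - ∑ i, a i) / 2)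
    (by linarith) (by linarith)
    (smul_add_singleton_subset_iff.mpr fun x hx => ?_)
    (smul_add_singleton_subset_iff.mpr fun x hx => convex_stdSimplexSet d (hMA hx)
      zero_mem_stdSimplexSet (by linarith) (by linarith) (by ring))
  have hxa : ∑ i, x i ≤ ∑ i, a i := hmax hx
  rw [smul_zero, add_zero]
  refine smul_mem_stdSimplexSet (hMA hx) (by linarith) ?_
  nlinarith [mul_le_mul_of_nonneg_left hxa (by linarith : (0 : ℝ) ≤ 1 + (1 - ∑ i, a i) / 2)]

def TouchesAllFacets (M : Set (Fin d → ℝ)) : Prop :=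
  (∀ i, ∃ a ∈ M, a i = 0) ∧ ∃ a ∈ M, ∑ i, a i = 1

namespace TouchesAllFacets

variable {μ : ℝ} {t : Fin d → ℝ}

theorem nonneg_of_smul_add_singleton_subset (hM : TouchesAllFacets M)
    (h : μ • M + {t} ⊆ stdSimplexSet d) (i : Fin d) : 0 ≤ t i := by
  obtain ⟨a, ha, hai⟩ := hM.1 i
  simpa [hai] using (smul_add_singleton_subset_iff.mp h a ha).1 i

theorem add_sum_le_one_of_smul_add_singleton_subset (hM : TouchesAllFacets M)
    (h : μ • M + {t} ⊆ stdSimplexSet d) : μ + ∑ i, t i ≤ 1 := by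
  obtain ⟨a, ha, hsum⟩ := hM.2
  simpa [Finset.sum_add_distrib, ← Finset.mul_sum, hsum] using
    (smul_add_singleton_subset_iff.mp h a ha).2

theorem not_hasHomotheticSplitting (hM : TouchesAllFacets M) (hMcpt : IsCompact M)
    (hMconv : Convex ℝ M) (hM2 : M.Nontrivial) : ¬ HasHomotheticSplitting (stdSimplexSet d) M := by
  rintro ⟨l, _, _, hl0, hl1, hA', hA'', -, -, -, -, ⟨μ', t', hμ', rfl⟩, ⟨μ'', t'', hμ'', rfl⟩,
    hne, -, hsplit⟩
  rw [hMconv.combo_smul_add_singleton hl0.le hl1.le hμ'.le hμ''.le] at hsplit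
  obtain ⟨hμ, ht⟩ := eq_one_and_eq_zero_of_smul_add_singleton_eq hMcpt.isBounded hM2
    (add_pos (mul_pos hl0 hμ') (mul_pos (sub_pos.mpr hl1) hμ'')) hsplit.symm
  have ht' : t' = 0 := funext fun i => by
    have hi := congrFun ht i
    simp only [Pi.add_apply, Pi.smul_apply, smul_eq_mul, Pi.zero_apply] at hi ⊢
    have h' := hM.nonneg_of_smul_add_singleton_subset hA' i
    have h'' := mul_nonneg (sub_pos.mpr hl1).le (hM.nonneg_of_smul_add_singleton_subset hA'' i)
    nlinarith
  have hμ'le : μ' ≤ 1 := by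
    simpa [ht'] using hM.add_sum_le_one_of_smul_add_singleton_subset hA'
  have hμ''le : μ'' ≤ 1 := by
    linarith [hM.add_sum_le_one_of_smul_add_singleton_subset hA'',
      (Finset.sum_nonneg fun i _ => hM.nonneg_of_smul_add_singleton_subset hA'' i :
        0 ≤ ∑ i, t'' i)]
  have hμ'1 : μ' = 1 := by nlinarith
  apply hne
  rw [hμ'1, ht', one_smul, Set.add_singleton]
  simp

end TouchesAllFacets

end Facets

theorem stmt4_general {d : ℕ} (M : Set (Fin d → ℝ))
    (hMA : M ⊆ stdSimplexSet d)
    (hMcpt : IsCompact M) (hMconv : Convex ℝ M)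
    (hM2 : ∃ a ∈ M, ∃ b ∈ M, a ≠ b) :
    ((∀ i, ∃ a ∈ M, a i = 0) ∧ (∃ a ∈ M, ∑ i, a i = 1))
    ↔
    ¬ ∃ (l : ℝ) (M' M'' : Set (Fin d → ℝ)), 0 < l ∧ l < 1 ∧
        M' ⊆ stdSimplexSet d ∧ M'' ⊆ stdSimplexSet d ∧
        IsCompact M' ∧ Convex ℝ M' ∧ IsCompact M'' ∧ Convex ℝ M'' ∧
        PosHomotheticTo M' M ∧ PosHomotheticTo M'' M ∧
        M' ≠ M ∧ M'' ≠ M ∧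
        M = l • M' + (1 - l) • M'' := by
  refine ⟨fun h => TouchesAllFacets.not_hasHomotheticSplitting h hMcpt hMconv hM2,
    fun h => ⟨fun i => ?_, ?_⟩⟩
  · by_contra! hi
    exact h (hasHomotheticSplitting_of_forall_apply_ne_zero hMA hMcpt hMconv hM2 hi)
  · by_contra! hs
    exact h (hasHomotheticSplitting_of_forall_sum_ne_one hMA hMcpt hMconv hM2 hs)

/-- A nonempty compact convex subset `M` of the unit simplex `A` (with at least two points)
touches every facet of `A` iff `M` cannot be written as `λ•M' + (1−λ)•M''` with
`λ ∈ (0,1)` and `M', M'' ⊆ A` compact convex sets homothetic to `M` but distinct from `M`. -/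
theorem stmt4 {d : ℕ} (M : Set (Fin d → ℝ))
    (hMA : M ⊆ stdSimplexSet d) (hMne : M.Nonempty)
    (hMcpt : IsCompact M) (hMconv : Convex ℝ M)
    (hM2 : ∃ a ∈ M, ∃ b ∈ M, a ≠ b) :
    ((∀ i, ∃ a ∈ M, a i = 0) ∧ (∃ a ∈ M, ∑ i, a i = 1))
    ↔
    ¬ ∃ (l : ℝ) (M' M'' : Set (Fin d → ℝ)), 0 < l ∧ l < 1 ∧
        M' ⊆ stdSimplexSet d ∧ M'' ⊆ stdSimplexSet d ∧
        IsCompact M' ∧ Convex ℝ M' ∧ IsCompact M'' ∧ Convex ℝ M'' ∧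
        PosHomotheticTo M' M ∧ PosHomotheticTo M'' M ∧
        M' ≠ M ∧ M'' ≠ M ∧
        M = l • M' + (1 - l) • M'' :=
  stmt4_general M hMA hMcpt hMconv hM2
end

section
/- Let A be the unit simplex in ℝ^d and suppose a compact convex set M ⊆ A is decomposable as a convex body, i.e., M = K' + K'' with convex bodies K', K'' ⊂ ℝ^d neither homothetic to M. Then there exist λ ∈ (0,1), t ∈ ℝ^d such that M' = (1/λ)(K' + t) ⊆ A and M'' = (1/(1−λ))(K'' − t) ⊆ A, giving a decomposition M = λM' + (1−λ)M'' into compact convex subsets of A not homothetic to M. -/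
/-!
Translate `K'` by the vector `-g` of its coordinatewise minima: it then lies in the simplex
scaled by `λ = max_{K'} Σᵢ aᵢ - Σᵢ gᵢ`. Adding to a point of `K''` first a point of `K'` realising
`gᵢ`, then one realising the maximal coordinate sum, and using `K' + K'' ⊆ A` shows that `K'' + g`
lies in the simplex scaled by `1 - λ`. If `λ ≤ 0` or `λ ≥ 1`, one of the two translates is squeezed
into `{0}`, so the corresponding summand is a point, which is homothetic to `M`.
-/

open scoped Pointwise

/-- A convex body: a nonempty compact convex set. -/
def IsConvexBody {E : Type*} [AddCommGroup E] [Module ℝ E] [TopologicalSpace E]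
    (K : Set E) : Prop :=
  K.Nonempty ∧ IsCompact K ∧ Convex ℝ K

/-- `K'` is homothetic to `K`: `K' = μ • K + {t}` for some `μ ≥ 0` and translation `t`. -/
def HomotheticTo {E : Type*} [AddCommGroup E] [Module ℝ E] (K' K : Set E) : Prop :=
  ∃ (μ : ℝ) (t : E), 0 ≤ μ ∧ K' = μ • K + ({t} : Set E)

section Homothety

variable {E : Type*} [AddCommGroup E] [Module ℝ E] {K M : Set E}

theorem homotheticTo_singleton (hM : M.Nonempty) (v : E) : HomotheticTo ({v} : Set E) M :=
  ⟨0, v, le_rfl, by rw [Set.zero_smul_set hM, zero_add]⟩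

theorem HomotheticTo.add_singleton (h : HomotheticTo K M) (t : E) :
    HomotheticTo (K + {t}) M := by
  obtain ⟨μ, s, hμ, rfl⟩ := h
  exact ⟨μ, s + t, hμ, by rw [add_assoc, Set.singleton_add_singleton]⟩

theorem HomotheticTo.smul (h : HomotheticTo K M) {r : ℝ} (hr : 0 ≤ r) :
    HomotheticTo (r • K) M := by
  obtain ⟨μ, s, hμ, rfl⟩ := h
  exact ⟨r * μ, r • s, mul_nonneg hr hμ,
    by rw [smul_add, smul_smul, Set.smul_set_singleton]⟩

theorem not_homotheticTo_inv_smul_add_singleton (h : ¬ HomotheticTo K M) {r : ℝ} (hr : 0 < r)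
    (t : E) : ¬ HomotheticTo (r⁻¹ • (K + {t})) M := by
  intro h'
  apply h
  have h'' := (h'.smul hr.le).add_singleton (-t)
  rwa [smul_inv_smul₀ hr.ne', add_assoc, Set.singleton_add_singleton, add_neg_cancel,
    Set.singleton_zero, add_zero] at h''

end Homothety

/-- Equal to `r • stdSimplexSet d` for `r ≥ 0`, but empty (not a reflected simplex) for `r < 0`. -/
def scaledSimplex (d : ℕ) (r : ℝ) : Set (Fin d → ℝ) := {c | (∀ i, 0 ≤ c i) ∧ ∑ i, c i ≤ r}

section Simplex

variable {d : ℕ}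

theorem scaledSimplex_subset_zero {r : ℝ} (hr : r ≤ 0) : scaledSimplex d r ⊆ {0} := by
  rintro c ⟨hc, hsum⟩
  have hzero := (Finset.sum_eq_zero_iff_of_nonneg fun i _ => hc i).1
    (le_antisymm (hsum.trans hr) (Finset.sum_nonneg fun i _ => hc i))
  exact funext fun i => hzero i (Finset.mem_univ i)

theorem inv_smul_subset_stdSimplexSet {S : Set (Fin d → ℝ)} {r : ℝ} (hr : 0 < r)
    (hS : S ⊆ scaledSimplex d r) : r⁻¹ • S ⊆ stdSimplexSet d := by
  rintro _ ⟨c, hc, rfl⟩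
  obtain ⟨hnonneg, hsum⟩ := hS hc
  refine ⟨fun i => mul_nonneg (inv_nonneg.2 hr.le) (hnonneg i), ?_⟩
  simp only [Pi.smul_apply, smul_eq_mul, ← Finset.mul_sum]
  calc r⁻¹ * ∑ i, c i ≤ r⁻¹ * r := mul_le_mul_of_nonneg_left hsum (inv_nonneg.2 hr.le)
    _ = 1 := inv_mul_cancel₀ hr.ne'

theorem homotheticTo_of_add_singleton_subset_scaledSimplex {K M : Set (Fin d → ℝ)}
    (hK : K.Nonempty) (hM : M.Nonempty) {t : Fin d → ℝ} {r : ℝ}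
    (hsub : K + {t} ⊆ scaledSimplex d r) (hr : r ≤ 0) : HomotheticTo K M := by
  have hKt : K ⊆ {-t} := fun a ha => by
    have hat : a + t = 0 := scaledSimplex_subset_zero hr (hsub (Set.add_mem_add ha rfl))
    exact eq_neg_of_add_eq_zero_left hat
  rw [hK.subset_singleton_iff.1 hKt]
  exact homotheticTo_singleton hM (-t)

theorem add_singleton_neg_subset_scaledSimplex {K : Set (Fin d → ℝ)} {g : Fin d → ℝ} {S : ℝ}
    (hg : ∀ a ∈ K, ∀ i, g i ≤ a i) (hS : ∀ a ∈ K, ∑ i, a i ≤ S) :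
    K + {-g} ⊆ scaledSimplex d (S - ∑ i, g i) := by
  rintro _ ⟨a, ha, _, rfl, rfl⟩
  refine ⟨fun i => by simpa [← sub_eq_add_neg] using hg a ha i, ?_⟩
  simp only [Pi.add_apply, Pi.neg_apply, ← sub_eq_add_neg, Finset.sum_sub_distrib]
  linarith [hS a ha]

theorem add_singleton_subset_scaledSimplex_of_add_subset {K' K'' : Set (Fin d → ℝ)}
    (hA : K' + K'' ⊆ stdSimplexSet d) {g : Fin d → ℝ} {S : ℝ}
    (hg : ∀ i, ∃ x ∈ K', x i ≤ g i) (hS : ∃ w ∈ K', S ≤ ∑ i, w i) :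
    K'' + {g} ⊆ scaledSimplex d (1 - (S - ∑ i, g i)) := by
  rintro _ ⟨b, hb, _, rfl, rfl⟩
  refine ⟨fun i => ?_, ?_⟩
  · obtain ⟨x, hx, hxi⟩ := hg i
    have := (hA (Set.add_mem_add hx hb)).1 i
    simp only [Pi.add_apply] at this ⊢
    linarith
  · obtain ⟨w, hw, hSw⟩ := hS
    have := (hA (Set.add_mem_add hw hb)).2
    simp only [Pi.add_apply, Finset.sum_add_distrib] at this ⊢
    linarith

theorem IsCompact.exists_forall_coord_le {K : Set (Fin d → ℝ)} (hK : IsCompact K)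
    (hne : K.Nonempty) : ∃ g : Fin d → ℝ, (∀ a ∈ K, ∀ i, g i ≤ a i) ∧ ∀ i, ∃ x ∈ K, x i ≤ g i := by
  choose x hxK hxmin using fun i : Fin d => hK.exists_isMinOn hne (continuous_apply i).continuousOn
  exact ⟨fun i => x i i, fun a ha i => hxmin i ha, fun i => ⟨x i, hxK i, le_rfl⟩⟩

end Simplex

theorem stmt5_general {d : ℕ} (M K' K'' : Set (Fin d → ℝ))
    (hMA : M ⊆ stdSimplexSet d) (hMne : M.Nonempty)
    (hK' : IsConvexBody K') (hK'' : IsConvexBody K'')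
    (hdecomp : M = K' + K'')
    (h1 : ¬ HomotheticTo K' M) (h2 : ¬ HomotheticTo K'' M) :
    ∃ (l : ℝ) (t : Fin d → ℝ), 0 < l ∧ l < 1 ∧
      l⁻¹ • (K' + ({t} : Set (Fin d → ℝ))) ⊆ stdSimplexSet d ∧
      (1 - l)⁻¹ • (K'' + ({-t} : Set (Fin d → ℝ))) ⊆ stdSimplexSet d ∧
      M = l • (l⁻¹ • (K' + ({t} : Set (Fin d → ℝ))))
          + (1 - l) • ((1 - l)⁻¹ • (K'' + ({-t} : Set (Fin d → ℝ)))) ∧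
      IsCompact (l⁻¹ • (K' + ({t} : Set (Fin d → ℝ)))) ∧
      Convex ℝ (l⁻¹ • (K' + ({t} : Set (Fin d → ℝ)))) ∧
      IsCompact ((1 - l)⁻¹ • (K'' + ({-t} : Set (Fin d → ℝ)))) ∧
      Convex ℝ ((1 - l)⁻¹ • (K'' + ({-t} : Set (Fin d → ℝ)))) ∧
      ¬ HomotheticTo (l⁻¹ • (K' + ({t} : Set (Fin d → ℝ)))) M ∧
      ¬ HomotheticTo ((1 - l)⁻¹ • (K'' + ({-t} : Set (Fin d → ℝ)))) M := by
  obtain ⟨hK'ne, hK'cpt, hK'conv⟩ := hK'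
  obtain ⟨hK''ne, hK''cpt, hK''conv⟩ := hK''
  obtain ⟨g, hg_le, hg_att⟩ := hK'cpt.exists_forall_coord_le hK'ne
  obtain ⟨w, hw, hw_max⟩ := hK'cpt.exists_isMaxOn hK'ne
    (continuous_finsetSum Finset.univ fun i _ => continuous_apply i).continuousOn
  set l := ∑ i, w i - ∑ i, g i
  have hK'sub : K' + {-g} ⊆ scaledSimplex d l :=
    add_singleton_neg_subset_scaledSimplex hg_le fun a ha => hw_max ha
  have hK''sub : K'' + {- -g} ⊆ scaledSimplex d (1 - l) := by
    rw [neg_neg]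
    exact add_singleton_subset_scaledSimplex_of_add_subset (hdecomp ▸ hMA) hg_att ⟨w, hw, le_rfl⟩
  have hl0 : 0 < l := lt_of_not_ge fun h =>
    h1 (homotheticTo_of_add_singleton_subset_scaledSimplex hK'ne hMne hK'sub h)
  have hl1 : 0 < 1 - l := lt_of_not_ge fun h =>
    h2 (homotheticTo_of_add_singleton_subset_scaledSimplex hK''ne hMne hK''sub h)
  refine ⟨l, -g, hl0, sub_pos.1 hl1, inv_smul_subset_stdSimplexSet hl0 hK'sub,
    inv_smul_subset_stdSimplexSet hl1 hK''sub, ?_,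
    (hK'cpt.add isCompact_singleton).smul _, (hK'conv.add (convex_singleton _)).smul _,
    (hK''cpt.add isCompact_singleton).smul _, (hK''conv.add (convex_singleton _)).smul _,
    not_homotheticTo_inv_smul_add_singleton h1 hl0 _,
    not_homotheticTo_inv_smul_add_singleton h2 hl1 _⟩
  rw [smul_inv_smul₀ hl0.ne', smul_inv_smul₀ hl1.ne', hdecomp, add_add_add_comm,
    Set.singleton_add_singleton, add_neg_cancel, Set.singleton_zero, add_zero]

/-- If a compact convex subset `M` of the unit simplex is decomposable as a convex body,
`M = K' + K''` with neither summand homothetic to `M`, then there are `λ ∈ (0,1)` and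
`t ∈ ℝ^d` such that `M' = (1/λ)(K'+t)` and `M'' = (1/(1−λ))(K''−t)` are compact convex
subsets of the simplex, not homothetic to `M`, with `M = λM' + (1−λ)M''`. -/
theorem stmt5 {d : ℕ} (M K' K'' : Set (Fin d → ℝ))
    (hMA : M ⊆ stdSimplexSet d) (hMne : M.Nonempty)
    (hMcpt : IsCompact M) (hMconv : Convex ℝ M)
    (hK' : IsConvexBody K') (hK'' : IsConvexBody K'')
    (hdecomp : M = K' + K'')
    (h1 : ¬ HomotheticTo K' M) (h2 : ¬ HomotheticTo K'' M) :
    ∃ (l : ℝ) (t : Fin d → ℝ), 0 < l ∧ l < 1 ∧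
      l⁻¹ • (K' + ({t} : Set (Fin d → ℝ))) ⊆ stdSimplexSet d ∧
      (1 - l)⁻¹ • (K'' + ({-t} : Set (Fin d → ℝ))) ⊆ stdSimplexSet d ∧
      M = l • (l⁻¹ • (K' + ({t} : Set (Fin d → ℝ))))
          + (1 - l) • ((1 - l)⁻¹ • (K'' + ({-t} : Set (Fin d → ℝ)))) ∧
      IsCompact (l⁻¹ • (K' + ({t} : Set (Fin d → ℝ)))) ∧
      Convex ℝ (l⁻¹ • (K' + ({t} : Set (Fin d → ℝ)))) ∧
      IsCompact ((1 - l)⁻¹ • (K'' + ({-t} : Set (Fin d → ℝ)))) ∧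
      Convex ℝ ((1 - l)⁻¹ • (K'' + ({-t} : Set (Fin d → ℝ)))) ∧
      ¬ HomotheticTo (l⁻¹ • (K' + ({t} : Set (Fin d → ℝ)))) M ∧
      ¬ HomotheticTo ((1 - l)⁻¹ • (K'' + ({-t} : Set (Fin d → ℝ)))) M :=
  stmt5_general M K' K'' hMA hMne hK' hK'' hdecomp h1 h2
end

section
/- In the one-good monopoly problem, a mechanism given by a posted price p ∈ (0,1) — allocate the good and charge p to every type θ ≥ p, allocate nothing and charge 0 to every type θ < p — is an extreme point of the set of incentive-compatible, individually rational (IC-IR) mechanisms: it cannot be written as a pointwise-a.e. convex combination x = λx' + (1−λ)x'', λ ∈ (0,1), of two IC-IR mechanisms x' ≠ x''. -/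
/-!
Below the price the posted-price mechanism allocates nothing and charges nothing, the least
possible values, so both components of a convex decomposition do the same. Above the price it
allocates with probability one, the largest possible value, and charges `p`. Each component
excludes types `θ' < p` arbitrarily close to `p` (the decomposition holds a.e., and a co-null set
is dense), and incentive compatibility for `θ'` forces every allocating type to pay at least `θ'`,
hence at least `p`; as the average payment is `p`, both components charge exactly `p`.
-/

open MeasureTheory

/-- A mechanism `(q,t)` on the type space `[0,1]` is incentive compatible and individually
rational: allocations in `[0,1]`, nonnegative payments, truth-telling, and participation. -/
def ICIR (q t : ℝ → ℝ) : Prop :=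
  (∀ θ ∈ Set.Icc (0 : ℝ) 1, q θ ∈ Set.Icc (0 : ℝ) 1 ∧ 0 ≤ t θ) ∧
  (∀ θ ∈ Set.Icc (0 : ℝ) 1, ∀ θ' ∈ Set.Icc (0 : ℝ) 1,
    θ * q θ' - t θ' ≤ θ * q θ - t θ) ∧
  (∀ θ ∈ Set.Icc (0 : ℝ) 1, 0 ≤ θ * q θ - t θ)

lemma eq_and_eq_of_convex_comb_eq_of_le {a b c l : ℝ} (hl0 : 0 < l) (hl1 : l < 1)
    (ha : a ≤ c) (hb : b ≤ c) (h : c = l * a + (1 - l) * b) : a = c ∧ b = c := by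
  constructor <;> nlinarith

lemma eq_and_eq_of_convex_comb_eq_of_ge {a b c l : ℝ} (hl0 : 0 < l) (hl1 : l < 1)
    (ha : c ≤ a) (hb : c ≤ b) (h : c = l * a + (1 - l) * b) : a = c ∧ b = c := by
  constructor <;> nlinarith

lemma exists_mem_Ioo_of_ae_restrict {s : Set ℝ} {P : ℝ → Prop}
    (hP : ∀ᵐ x ∂volume.restrict s, P x) {a b : ℝ} (hab : a < b) (hs : Set.Ioo a b ⊆ s) :
    ∃ x ∈ Set.Ioo a b, P x :=
  Measure.exists_mem_of_measure_ne_zero_of_ae (by simpa using hab)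
    (ae_restrict_of_ae_restrict_of_subset hs hP)

lemma ICIR.eq_zero_of_convex_comb_eq_zero {q₁ t₁ q₂ t₂ : ℝ → ℝ} {l θ : ℝ} (hl0 : 0 < l)
    (hl1 : l < 1) (h₁ : ICIR q₁ t₁) (h₂ : ICIR q₂ t₂) (hθ : θ ∈ Set.Icc (0 : ℝ) 1)
    (hq : 0 = l * q₁ θ + (1 - l) * q₂ θ) (ht : 0 = l * t₁ θ + (1 - l) * t₂ θ) :
    (q₁ θ = 0 ∧ q₂ θ = 0) ∧ (t₁ θ = 0 ∧ t₂ θ = 0) :=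
  ⟨eq_and_eq_of_convex_comb_eq_of_ge hl0 hl1 (h₁.1 θ hθ).1.1 (h₂.1 θ hθ).1.1 hq,
    eq_and_eq_of_convex_comb_eq_of_ge hl0 hl1 (h₁.1 θ hθ).2 (h₂.1 θ hθ).2 ht⟩

lemma ICIR.le_payment_of_excluded_types {q t : ℝ → ℝ} (h : ICIR q t) {θ p : ℝ}
    (hθ : θ ∈ Set.Icc (0 : ℝ) 1) (hqθ : q θ = 1)
    (hexcl : ∀ c < p, ∃ θ' ∈ Set.Icc (0 : ℝ) 1, c < θ' ∧ q θ' = 0 ∧ t θ' = 0) :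
    p ≤ t θ := by
  refine le_of_forall_lt fun c hc => ?_
  obtain ⟨θ', hθ', hcθ', hq', ht'⟩ := hexcl c hc
  -- type `θ'` must not gain from reporting `θ`
  have hIC := h.2.1 θ' hθ' θ hθ
  rw [hqθ, hq', ht'] at hIC
  linarith

/-- In the one-good monopoly problem, the posted-price mechanism with price `p ∈ (0,1)` is
an extreme point of the set of IC-IR mechanisms (identified up to a.e. equality): whenever
it is an a.e. pointwise convex combination of two IC-IR mechanisms, the two coincide a.e. -/
theorem stmt18 (p : ℝ) (hp0 : 0 < p) (hp1 : p < 1)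
    (q t : ℝ → ℝ)
    (hq : ∀ θ, q θ = if p ≤ θ then 1 else 0)
    (ht : ∀ θ, t θ = if p ≤ θ then p else 0) :
    ∀ (q₁ t₁ q₂ t₂ : ℝ → ℝ) (l : ℝ), 0 < l → l < 1 →
      ICIR q₁ t₁ → ICIR q₂ t₂ →
      (∀ᵐ θ ∂(volume.restrict (Set.Icc (0 : ℝ) 1)),
        q θ = l * q₁ θ + (1 - l) * q₂ θ ∧ t θ = l * t₁ θ + (1 - l) * t₂ θ) →
      (∀ᵐ θ ∂(volume.restrict (Set.Icc (0 : ℝ) 1)), q₁ θ = q₂ θ ∧ t₁ θ = t₂ θ) := by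
  intro q₁ t₁ q₂ t₂ l hl0 hl1 h₁ h₂ hmix
  have below : ∀ θ ∈ Set.Icc (0 : ℝ) 1, θ < p →
      q θ = l * q₁ θ + (1 - l) * q₂ θ ∧ t θ = l * t₁ θ + (1 - l) * t₂ θ →
      (q₁ θ = 0 ∧ q₂ θ = 0) ∧ (t₁ θ = 0 ∧ t₂ θ = 0) := by
    rintro θ hθ hθp ⟨hqθ, htθ⟩
    rw [hq, if_neg hθp.not_ge] at hqθ
    rw [ht, if_neg hθp.not_ge] at htθ
    exact ICIR.eq_zero_of_convex_comb_eq_zero hl0 hl1 h₁ h₂ hθ hqθ htθ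
  have excluded : ∀ c < p, ∃ θ' ∈ Set.Icc (0 : ℝ) 1,
      c < θ' ∧ (q₁ θ' = 0 ∧ q₂ θ' = 0) ∧ (t₁ θ' = 0 ∧ t₂ θ' = 0) := by
    intro c hc
    obtain ⟨θ', ⟨hcθ', hθ'p⟩, hθ'mix⟩ := exists_mem_Ioo_of_ae_restrict hmix (max_lt hc hp0)
      fun x hx => ⟨(le_max_right c 0).trans hx.1.le, hx.2.le.trans hp1.le⟩
    have hθ' : θ' ∈ Set.Icc (0 : ℝ) 1 := ⟨(le_max_right c 0).trans hcθ'.le, hθ'p.le.trans hp1.le⟩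
    exact ⟨θ', hθ', (le_max_left c 0).trans_lt hcθ', below θ' hθ' hθ'p hθ'mix⟩
  filter_upwards [hmix, ae_restrict_mem measurableSet_Icc] with θ hθmix hθ
  rcases lt_or_ge θ p with hθp | hpθ
  · obtain ⟨⟨hq₁, hq₂⟩, ht₁, ht₂⟩ := below θ hθ hθp hθmix
    exact ⟨hq₁.trans hq₂.symm, ht₁.trans ht₂.symm⟩
  obtain ⟨hqθ, htθ⟩ := hθmix
  rw [hq, if_pos hpθ] at hqθ
  rw [ht, if_pos hpθ] at htθ
  obtain ⟨hq₁, hq₂⟩ :=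
    eq_and_eq_of_convex_comb_eq_of_le hl0 hl1 (h₁.1 θ hθ).1.2 (h₂.1 θ hθ).1.2 hqθ
  have hp₁ : p ≤ t₁ θ := h₁.le_payment_of_excluded_types hθ hq₁ fun c hc =>
    let ⟨θ', hθ', hcθ', hq', ht'⟩ := excluded c hc; ⟨θ', hθ', hcθ', hq'.1, ht'.1⟩
  have hp₂ : p ≤ t₂ θ := h₂.le_payment_of_excluded_types hθ hq₂ fun c hc =>
    let ⟨θ', hθ', hcθ', hq', ht'⟩ := excluded c hc; ⟨θ', hθ', hcθ', hq'.2, ht'.2⟩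
  obtain ⟨ht₁, ht₂⟩ := eq_and_eq_of_convex_comb_eq_of_ge hl0 hl1 hp₁ hp₂ htθ
  exact ⟨hq₁.trans hq₂.symm, ht₁.trans ht₂.symm⟩
end
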